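/- arXiv:1510.05631 — 2 statements merged into one kernel-verified Lean document; each statement's English description precedes it below -/
import Mathlib

section
/- For every integer n ≥ 2, if the family of real numbers τ_{k,l} (for 1 ≤ l < k ≤ n) satisfies the recursion τ_{k-1,l} = ((l+1)/k)·τ_{k,l+1} + ((k-l)/k)·τ_{k,l} for all k > l+1, then for all 1 ≤ i ≤ n-1 one has τ_{n,i} = Σ_{j=i}^{n-1} (-1)^{i-j} · (1/(j+1)) · C(n-i-1, j-i) · C(n, i) · τ_{j+1,j}. -/
open Finset

lemma sfs_aux (n : ℕ) (τ : ℕ → ℕ → ℝ)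
    (hrec : ∀ k l : ℕ, 1 ≤ l → l + 1 < k → k ≤ n →
      τ (k - 1) l = ((l + 1 : ℝ) / k) * τ k (l + 1) + ((k - l : ℝ) / k) * τ k l) :
    ∀ d i : ℕ, 1 ≤ i → i + d + 1 ≤ n →
      τ (i + d + 1) i = ∑ t ∈ range (d + 1),
        (-1 : ℝ) ^ t * (1 / (i + t + 1 : ℝ)) * (Nat.choose d t : ℝ) *
          (Nat.choose (i + d + 1) i : ℝ) * τ (i + t + 1) (i + t) := by
  intro d
  induction d with
  | zero =>
    intro i hi hin
    have h1 : ((i:ℝ) + 1) ≠ 0 := by positivity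
    simp [Nat.choose_succ_self_right]
    field_simp
  | succ d ih =>
    intro i hi hin
    rw [show i + (d + 1) + 1 = i + d + 2 from by omega]
    have hA := ih i hi (by omega)
    have hB := ih (i + 1) (by omega) (by omega)
    rw [show i + 1 + d + 1 = i + d + 2 from by omega] at hB
    push_cast at hB
    have hk := hrec (i + d + 2) i hi (by omega) (by omega)
    rw [show i + d + 2 - 1 = i + d + 1 from by omega] at hk
    push_cast at hk
    have hKne : ((i : ℝ) + ↑d + 2) ≠ 0 := by positivity
    have hDne : ((d : ℝ) + 2) ≠ 0 := by positivity
    -- binomial identities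
    have hc1n : (i + d + 2) * Nat.choose (i + d + 1) i = (d + 2) * Nat.choose (i + d + 2) i := by
      have h1 := Nat.add_one_mul_choose_eq (i + d + 1) i
      have h2 := Nat.choose_succ_right_eq (i + d + 2) i
      rw [show i + d + 2 - i = d + 2 from by omega] at h2
      calc (i + d + 2) * Nat.choose (i + d + 1) i
          = Nat.succ (i + d + 1) * Nat.choose (i + d + 1) i := by rw [Nat.succ_eq_add_one]
        _ = Nat.choose (i + d + 2) (i + 1) * Nat.succ i := h1
        _ = Nat.choose (i + d + 2) (i + 1) * (i + 1) := by rw [Nat.succ_eq_add_one]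
        _ = Nat.choose (i + d + 2) i * (d + 2) := h2
        _ = (d + 2) * Nat.choose (i + d + 2) i := Nat.mul_comm _ _
    have hc1 : ((i : ℝ) + ↑d + 2) * (Nat.choose (i + d + 1) i : ℝ)
        = ((d : ℝ) + 2) * (Nat.choose (i + d + 2) i : ℝ) := by exact_mod_cast hc1n
    have hc2n : (i + 1) * Nat.choose (i + d + 2) (i + 1) = (d + 2) * Nat.choose (i + d + 2) i := by
      have h2 := Nat.choose_succ_right_eq (i + d + 2) i
      rw [show i + d + 2 - i = d + 2 from by omega] at h2
      calc (i + 1) * Nat.choose (i + d + 2) (i + 1)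
          = Nat.choose (i + d + 2) (i + 1) * (i + 1) := Nat.mul_comm _ _
        _ = Nat.choose (i + d + 2) i * (d + 2) := h2
        _ = (d + 2) * Nat.choose (i + d + 2) i := Nat.mul_comm _ _
    have hc2 : ((i : ℝ) + 1) * (Nat.choose (i + d + 2) (i + 1) : ℝ)
        = ((d : ℝ) + 2) * (Nat.choose (i + d + 2) i : ℝ) := by exact_mod_cast hc2n
    have hc1' : ((i : ℝ) + ↑d + 2) / ((d : ℝ) + 2) * (Nat.choose (i + d + 1) i : ℝ)
        = (Nat.choose (i + d + 2) i : ℝ) := by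
      rw [div_mul_eq_mul_div, hc1]
      exact mul_div_cancel_left₀ _ hDne
    have hc2' : ((i : ℝ) + 1) / ((d : ℝ) + 2) * (Nat.choose (i + d + 2) (i + 1) : ℝ)
        = (Nat.choose (i + d + 2) i : ℝ) := by
      rw [div_mul_eq_mul_div, hc2]
      exact mul_div_cancel_left₀ _ hDne
    -- solve the recursion for τ (i+d+2) i
    have hX : τ (i + d + 2) i = ((i : ℝ) + ↑d + 2) / ((d : ℝ) + 2) * τ (i + d + 1) i
        - ((i : ℝ) + 1) / ((d : ℝ) + 2) * τ (i + d + 2) (i + 1) := by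
      rw [hk]
      field_simp
      ring
    -- extend the A-sum by one zero term
    have keyA : ∑ t ∈ range (d + 1 + 1),
          (-1 : ℝ) ^ t * (1 / (i + t + 1 : ℝ)) * (Nat.choose d t : ℝ) *
            (Nat.choose (i + d + 1) i : ℝ) * τ (i + t + 1) (i + t)
        = ∑ t ∈ range (d + 1),
          (-1 : ℝ) ^ t * (1 / (i + t + 1 : ℝ)) * (Nat.choose d t : ℝ) *
            (Nat.choose (i + d + 1) i : ℝ) * τ (i + t + 1) (i + t) := by
      rw [Finset.sum_range_succ, Nat.choose_succ_self]
      simp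
    rw [hX, hA, hB, ← keyA, Finset.mul_sum, Finset.mul_sum]
    have h1 : ∑ t ∈ range (d + 1 + 1),
          (((i : ℝ) + ↑d + 2) / ((d : ℝ) + 2) *
            ((-1 : ℝ) ^ t * (1 / (i + t + 1 : ℝ)) * (Nat.choose d t : ℝ) *
              (Nat.choose (i + d + 1) i : ℝ) * τ (i + t + 1) (i + t))
          - (-1 : ℝ) ^ t * (1 / (i + t + 1 : ℝ)) * (Nat.choose (d + 1) t : ℝ) *
              (Nat.choose (i + d + 2) i : ℝ) * τ (i + t + 1) (i + t))
        = ∑ t ∈ range (d + 1),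
          (((i : ℝ) + 1) / ((d : ℝ) + 2) *
            ((-1 : ℝ) ^ t * (1 / (i + 1 + t + 1 : ℝ)) * (Nat.choose d t : ℝ) *
              (Nat.choose (i + d + 2) (i + 1) : ℝ) * τ (i + 1 + t + 1) (i + 1 + t))) := by
      rw [Finset.sum_range_succ']
      have z0 : ((i : ℝ) + ↑d + 2) / ((d : ℝ) + 2) *
            ((-1 : ℝ) ^ (0:ℕ) * (1 / (i + (0:ℕ) + 1 : ℝ)) * (Nat.choose d 0 : ℝ) *
              (Nat.choose (i + d + 1) i : ℝ) * τ (i + 0 + 1) (i + 0))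
          - (-1 : ℝ) ^ (0:ℕ) * (1 / (i + (0:ℕ) + 1 : ℝ)) * (Nat.choose (d + 1) 0 : ℝ) *
              (Nat.choose (i + d + 2) i : ℝ) * τ (i + 0 + 1) (i + 0) = 0 := by
        simp only [pow_zero, Nat.choose_zero_right, Nat.add_zero, Nat.cast_zero, Nat.cast_one]
        linear_combination ((1 / ((i:ℝ) + 1)) * τ (i + 1) i) * hc1'
      rw [z0, add_zero]
      apply Finset.sum_congr rfl
      intro t ht
      have hpas : (Nat.choose (d + 1) (t + 1) : ℝ)
          = (Nat.choose d t : ℝ) + (Nat.choose d (t + 1) : ℝ) := by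
        exact_mod_cast Nat.choose_succ_succ d t
      rw [show i + (t + 1) + 1 = i + 1 + t + 1 from by omega,
        show i + (t + 1) = i + 1 + t from by omega, hpas]
      push_cast
      linear_combination
        ((-1:ℝ) ^ (t+1) * (1 / ((i:ℝ) + (t:ℝ) + 2)) * (Nat.choose d (t+1) : ℝ) *
          τ (i + 1 + t + 1) (i + 1 + t)) * hc1'
        - ((-1:ℝ) ^ t * (1 / ((i:ℝ) + (t:ℝ) + 2)) * (Nat.choose d t : ℝ) *
          τ (i + 1 + t + 1) (i + 1 + t)) * hc2'
    rw [Finset.sum_sub_distrib] at h1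
    linarith [h1]

theorem sfs_antisingleton_formula (n : ℕ) (hn : 2 ≤ n) (τ : ℕ → ℕ → ℝ)
    (hrec : ∀ k l : ℕ, 1 ≤ l → l + 1 < k → k ≤ n →
      τ (k - 1) l = ((l + 1 : ℝ) / k) * τ k (l + 1) + ((k - l : ℝ) / k) * τ k l) :
    ∀ i : ℕ, 1 ≤ i → i ≤ n - 1 →
      τ n i = ∑ j ∈ Finset.Icc i (n - 1),
        (-1 : ℝ) ^ (j - i) * (1 / (j + 1 : ℝ)) * (Nat.choose (n - i - 1) (j - i) : ℝ) *
          (Nat.choose n i : ℝ) * τ (j + 1) j := by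
  intro i hi1 hi2
  have haux := sfs_aux n τ hrec (n - 1 - i) i hi1 (by omega)
  rw [show i + (n - 1 - i) + 1 = n from by omega] at haux
  rw [haux, ← Finset.Ico_add_one_right_eq_Icc, Finset.sum_Ico_eq_sum_range, show n - 1 + 1 - i = n - 1 - i + 1 from by omega]
  apply Finset.sum_congr rfl
  intro t ht
  rw [show i + t - i = t from by omega, show n - i - 1 = n - 1 - i from by omega]
  push_cast
  ring
end

section
/- Let Q be an n×n lower triangular real matrix with pairwise distinct diagonal entries, and let U be the matrix defined recursively as in the spectral decomposition Q = U E U^{-1} (U lower triangular, unit diagonal, U_{ij} = (λ_i - λ_j)^{-1} Σ_{k=j}^{i-1} Q_{ik} U_{kj} for i > j, where λ_i = Σ_{k<i} Q_{ik} = -Q_{ii}). Then every entry in the first column of U equals 1, i.e., U_{i,1} = 1 for all i. -/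
theorem first_column_of_U_is_ones (n : ℕ) (hn : 0 < n)
    (Q U : Matrix (Fin n) (Fin n) ℝ)
    (hLT : ∀ i j : Fin n, i < j → Q i j = 0)
    (hcons : ∀ i : Fin n, Q i i = -∑ k ∈ Finset.Iio i, Q i k)
    (hdist : ∀ i j : Fin n, i ≠ j → Q i i ≠ Q j j)
    (hUdiag : ∀ i : Fin n, U i i = 1)
    (hUupper : ∀ i j : Fin n, i < j → U i j = 0)
    (hUrec : ∀ i j : Fin n, j < i →
      U i j = (1 / ((-Q i i) - (-Q j j))) * ∑ k ∈ Finset.Ico j i, Q i k * U k j) :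
    ∀ i : Fin n, U i ⟨0, hn⟩ = 1 := by
  set z : Fin n := ⟨0, hn⟩ with hz
  have hzIio : Finset.Iio z = (∅ : Finset (Fin n)) := by
    ext k
    simp [Fin.lt_def, hz]
  have hQ00 : Q z z = 0 := by
    rw [hcons z, hzIio]; simp
  suffices key : ∀ m : ℕ, ∀ i : Fin n, (i : ℕ) < m → U i z = 1 by
    intro i; exact key ((i : ℕ) + 1) i (Nat.lt_succ_self _)
  intro m
  induction m with
  | zero => intro i hi; omega
  | succ m ihm =>
    intro i hi
    have ih : ∀ k : Fin n, k < i → U k z = 1 := by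
      intro k hk
      exact ihm k (by have := Fin.lt_def.mp hk; omega)
    rcases eq_or_ne i z with h | h
    · rw [h]; exact hUdiag z
    · have hvi : (i : ℕ) ≠ 0 := fun h0 => h (Fin.ext (by simp [hz, h0]))
      have hzi : z < i := by
        rw [Fin.lt_def]; simp only [hz]; omega
      have hrec := hUrec i z hzi
      have hIco : Finset.Ico z i = Finset.Iio i := by
        ext k; simp [hz, Fin.le_def]
      have hsum : ∑ k ∈ Finset.Ico z i, Q i k * U k z = ∑ k ∈ Finset.Iio i, Q i k := by
        rw [hIco]
        apply Finset.sum_congr rfl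
        intro k hk
        rw [ih k (Finset.mem_Iio.mp hk), mul_one]
      have hne : Q i i ≠ 0 := by
        have := hdist i z h
        rwa [hQ00] at this
      have hQsum : ∑ k ∈ Finset.Iio i, Q i k = -Q i i := by
        rw [hcons i]; ring
      rw [hrec, hsum, hQ00, hQsum]
      rw [neg_zero, sub_zero, one_div, inv_mul_cancel₀ (neg_ne_zero.mpr hne)]
end
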